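/- arXiv:1004.0269 — 2 statements merged into one kernel-verified Lean document; each statement's English description precedes it below -/
import Mathlib

section
/- Let A_y ≥ A_z > 0 and λ_y, λ_z ≥ 0 satisfy λ_y A_z ≤ λ_z A_y. Then the function K(x) = (A_y x + λ_y) ln(A_y x + λ_y) − (A_z x + λ_z) ln(A_z x + λ_z) is convex on the interval [0,1]. -/
/-! On `x > 0` both arguments of the logarithms are positive, and
`K'' x = A_y² / (A_y x + λ_y) - A_z² / (A_z x + λ_z)`. Clearing denominators, this is nonnegative
because `A_y² (A_z x + λ_z) - A_z² (A_y x + λ_y)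
  = A_y A_z (A_y - A_z) x + A_y (A_y λ_z - A_z λ_y) + A_z λ_y (A_y - A_z)`,
a sum of nonnegative terms under the degradedness conditions. Hence `K` is convex on `[0, ∞)`. -/

open Real Set

lemma hasDerivAt_affine_mul_log {A l x : ℝ} (h : A * x + l ≠ 0) :
    HasDerivAt (fun x => (A * x + l) * log (A * x + l)) (A * (log (A * x + l) + 1)) x := by
  have haff : HasDerivAt (fun x : ℝ => A * x + l) A x := by
    simpa using ((hasDerivAt_id x).const_mul A).add_const l
  exact ((hasDerivAt_mul_log h).comp x haff).congr_deriv (mul_comm _ _)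

lemma hasDerivAt_const_mul_log_affine_add_one {A l x : ℝ} (h : A * x + l ≠ 0) :
    HasDerivAt (fun x => A * (log (A * x + l) + 1)) (A ^ 2 / (A * x + l)) x := by
  have haff : HasDerivAt (fun x : ℝ => A * x + l) A x := by
    simpa using ((hasDerivAt_id x).const_mul A).add_const l
  exact ((((hasDerivAt_log h).comp x haff).add_const 1).const_mul A).congr_deriv
    (by ring : A * ((A * x + l)⁻¹ * A) = A ^ 2 / (A * x + l))

lemma sq_div_affine_le_sq_div_affine {Ay Az ly lz x : ℝ} (hAz : 0 ≤ Az) (hAyz : Az ≤ Ay)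
    (hly : 0 ≤ ly) (hdeg : ly * Az ≤ lz * Ay) (hx : 0 ≤ x)
    (hy : 0 < Ay * x + ly) (hz : 0 < Az * x + lz) :
    Az ^ 2 / (Az * x + lz) ≤ Ay ^ 2 / (Ay * x + ly) := by
  rw [div_le_div_iff₀ hz hy]
  have hAy : 0 ≤ Ay := hAz.trans hAyz
  nlinarith [mul_le_mul_of_nonneg_left hdeg hAy,
    mul_nonneg (mul_nonneg hAz hly) (sub_nonneg.2 hAyz),
    mul_nonneg (mul_nonneg (mul_nonneg hAy hAz) (sub_nonneg.2 hAyz)) hx]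

lemma convexOn_Ici_mul_log_affine_sub {Ay Az ly lz : ℝ} (hAz : 0 < Az) (hAyz : Az ≤ Ay)
    (hly : 0 ≤ ly) (hlz : 0 ≤ lz) (hdeg : ly * Az ≤ lz * Ay) :
    ConvexOn ℝ (Ici 0)
      (fun x => (Ay * x + ly) * log (Ay * x + ly) - (Az * x + lz) * log (Az * x + lz)) := by
  have hAy : 0 < Ay := hAz.trans_le hAyz
  have hpos : ∀ {A l : ℝ}, 0 < A → 0 ≤ l → ∀ x ∈ interior (Ici (0 : ℝ)), 0 < A * x + l := by
    intro A l hA hl x hx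
    rw [interior_Ici] at hx
    exact add_pos_of_pos_of_nonneg (mul_pos hA hx) hl
  refine convexOn_of_hasDerivWithinAt2_nonneg (convex_Ici 0)
    (f' := fun x => Ay * (log (Ay * x + ly) + 1) - Az * (log (Az * x + lz) + 1))
    (f'' := fun x => Ay ^ 2 / (Ay * x + ly) - Az ^ 2 / (Az * x + lz)) ?_ ?_ ?_ ?_
  · exact ((continuous_mul_log.comp (by fun_prop)).sub
      (continuous_mul_log.comp (by fun_prop))).continuousOn
  · intro x hx
    exact ((hasDerivAt_affine_mul_log (hpos hAy hly x hx).ne').sub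
      (hasDerivAt_affine_mul_log (hpos hAz hlz x hx).ne')).hasDerivWithinAt
  · intro x hx
    exact ((hasDerivAt_const_mul_log_affine_add_one (hpos hAy hly x hx).ne').sub
      (hasDerivAt_const_mul_log_affine_add_one (hpos hAz hlz x hx).ne')).hasDerivWithinAt
  · intro x hx
    have hx0 : 0 ≤ x := le_of_lt (by simpa using hx)
    exact sub_nonneg.2 (sq_div_affine_le_sq_div_affine hAz.le hAyz hly hdeg hx0
      (hpos hAy hly x hx) (hpos hAz hlz x hx))

/-- Under the degradedness conditions `A_y ≥ A_z > 0` and `λ_y A_z ≤ λ_z A_y`,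
the function `K(x) = (A_y x + λ_y) ln(A_y x + λ_y) − (A_z x + λ_z) ln(A_z x + λ_z)`
is convex on `[0,1]`. -/
theorem poisson_wiretap_K_convexOn
    (Ay Az ly lz : ℝ) (hAz : 0 < Az) (hAyz : Az ≤ Ay)
    (hly : 0 ≤ ly) (hlz : 0 ≤ lz) (hdeg : ly * Az ≤ lz * Ay) :
    ConvexOn ℝ (Set.Icc (0:ℝ) 1)
      (fun x => (Ay * x + ly) * Real.log (Ay * x + ly)
        - (Az * x + lz) * Real.log (Az * x + lz)) :=
  (convexOn_Ici_mul_log_affine_sub hAz hAyz hly hlz hdeg).subset Icc_subset_Ici_self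
    (convex_Icc 0 1)
end

section
/- Let A_y ≥ A_z > 0 and λ_y, λ_z ≥ 0 satisfy λ_y A_z ≤ λ_z A_y, and assume that at least one of these two inequalities is strict (i.e., A_y > A_z or λ_y A_z < λ_z A_y). Then the function K(x) = (A_y x + λ_y) ln(A_y x + λ_y) − (A_z x + λ_z) ln(A_z x + λ_z) is strictly convex on the interval [0,1]. -/
/-!
On the open interval the second derivative of `K` is
`A_y² / (A_y x + λ_y) - A_z² / (A_z x + λ_z)`. Cross-multiplying, its positivity amounts to
`A_y A_z x (A_y - A_z) + A_y (λ_z A_y - λ_y A_z) + λ_y A_z (A_y - A_z) > 0`: all three terms are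
nonnegative, and the first (if `A_z < A_y`) or the second (otherwise) is positive.
-/

open Real Topology

/-- The paper's `φ_u`, with `A = A_u` and `l = λ_u`. -/
noncomputable def mulLogAffine (A l x : ℝ) : ℝ := (A * x + l) * log (A * x + l)

lemma continuous_mulLogAffine (A l : ℝ) : Continuous (mulLogAffine A l) :=
  continuous_mul_log.comp (by fun_prop)

lemma hasDerivAt_mulLogAffine {A l x : ℝ} (h : A * x + l ≠ 0) :
    HasDerivAt (mulLogAffine A l) (A * (log (A * x + l) + 1)) x := by
  have := (hasDerivAt_mul_log h).comp x (((hasDerivAt_id' x).const_mul A).add_const l)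
  rwa [mul_one, mul_comm] at this

lemma hasDerivAt_mul_log_affine_add_one {A l x : ℝ} (h : A * x + l ≠ 0) :
    HasDerivAt (fun y => A * (log (A * y + l) + 1)) (A ^ 2 / (A * x + l)) x := by
  have := ((((hasDerivAt_id' x).const_mul A).add_const l).log h).add_const 1 |>.const_mul A
  simpa [sq, mul_div_assoc] using this

lemma hasDerivAt_deriv_sub_mulLogAffine {A₁ l₁ A₂ l₂ x : ℝ}
    (h₁ : A₁ * x + l₁ ≠ 0) (h₂ : A₂ * x + l₂ ≠ 0) :
    HasDerivAt (deriv fun y => mulLogAffine A₁ l₁ y - mulLogAffine A₂ l₂ y)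
      (A₁ ^ 2 / (A₁ * x + l₁) - A₂ ^ 2 / (A₂ * x + l₂)) x := by
  have hU : IsOpen {y : ℝ | A₁ * y + l₁ ≠ 0 ∧ A₂ * y + l₂ ≠ 0} :=
    (isOpen_ne_fun (by fun_prop) continuous_const).inter
      (isOpen_ne_fun (by fun_prop) continuous_const)
  have hderiv : (deriv fun y => mulLogAffine A₁ l₁ y - mulLogAffine A₂ l₂ y) =ᶠ[𝓝 x]
      fun y => A₁ * (log (A₁ * y + l₁) + 1) - A₂ * (log (A₂ * y + l₂) + 1) := by
    filter_upwards [hU.mem_nhds ⟨h₁, h₂⟩] with y ⟨hy₁, hy₂⟩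
    exact ((hasDerivAt_mulLogAffine hy₁).sub (hasDerivAt_mulLogAffine hy₂)).deriv
  exact ((hasDerivAt_mul_log_affine_add_one h₁).sub
    (hasDerivAt_mul_log_affine_add_one h₂)).congr_of_eventuallyEq hderiv

lemma sq_div_affine_lt_sq_div_affine {Ay Az ly lz x : ℝ} (hAz : 0 < Az) (hAyz : Az ≤ Ay)
    (hly : 0 ≤ ly) (hlz : 0 ≤ lz) (hdeg : ly * Az ≤ lz * Ay)
    (hstrict : Az < Ay ∨ ly * Az < lz * Ay) (hx : 0 < x) :
    Az ^ 2 / (Az * x + lz) < Ay ^ 2 / (Ay * x + ly) := by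
  have hAy : 0 < Ay := hAz.trans_le hAyz
  rw [div_lt_div_iff₀ (by positivity) (by positivity), ← sub_pos]
  have hsplit : Ay ^ 2 * (Az * x + lz) - Az ^ 2 * (Ay * x + ly) =
      Ay * Az * x * (Ay - Az) + Ay * (lz * Ay - ly * Az) + ly * Az * (Ay - Az) := by ring
  have hgap : 0 ≤ Ay - Az := sub_nonneg.2 hAyz
  have hdeg' : 0 ≤ lz * Ay - ly * Az := sub_nonneg.2 hdeg
  rw [hsplit]
  rcases hstrict with h | h
  · have : 0 < Ay * Az * x * (Ay - Az) := by have := sub_pos.2 h; positivity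
    positivity
  · have : 0 < Ay * (lz * Ay - ly * Az) := by have := sub_pos.2 h; positivity
    positivity

/-- Under the degradedness conditions `A_y ≥ A_z > 0` and `λ_y A_z ≤ λ_z A_y`,
with at least one of these inequalities strict, the function
`K(x) = (A_y x + λ_y) ln(A_y x + λ_y) − (A_z x + λ_z) ln(A_z x + λ_z)`
is strictly convex on `[0,1]`. -/
theorem poisson_wiretap_K_strictConvexOn
    (Ay Az ly lz : ℝ) (hAz : 0 < Az) (hAyz : Az ≤ Ay)
    (hly : 0 ≤ ly) (hlz : 0 ≤ lz) (hdeg : ly * Az ≤ lz * Ay)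
    (hstrict : Az < Ay ∨ ly * Az < lz * Ay) :
    StrictConvexOn ℝ (Set.Icc (0:ℝ) 1)
      (fun x => (Ay * x + ly) * Real.log (Ay * x + ly)
        - (Az * x + lz) * Real.log (Az * x + lz)) := by
  change StrictConvexOn ℝ (Set.Icc 0 1) fun x => mulLogAffine Ay ly x - mulLogAffine Az lz x
  have hAy : 0 < Ay := hAz.trans_le hAyz
  refine strictConvexOn_of_deriv2_pos (convex_Icc 0 1)
    ((continuous_mulLogAffine Ay ly).sub (continuous_mulLogAffine Az lz)).continuousOn ?_
  rw [interior_Icc]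
  rintro x ⟨hx, -⟩
  have hy : 0 < Ay * x + ly := by positivity
  have hz : 0 < Az * x + lz := by positivity
  rw [Function.iterate_succ_apply', Function.iterate_one,
    (hasDerivAt_deriv_sub_mulLogAffine hy.ne' hz.ne').deriv, sub_pos]
  exact sq_div_affine_lt_sq_div_affine hAz hAyz hly hlz hdeg hstrict hx
end
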